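/- arXiv:2108.03415 — 3 statements merged into one kernel-verified Lean document; each statement's English description precedes it below -/
import Mathlib

section
/- Comprehensions are stable under pullback: if ⦃α⦄ : X → A is a comprehension of α ∈ P(A) and f : A' → A is any morphism, and ⦃P_f(α)⦄ : X' → A' is a comprehension of P_f(α) ∈ P(A'), then the mediating square formed by ⦃P_f(α)⦄, f, ⦃α⦄ and the induced arrow X' → X is a pullback square in C. -/
open CategoryTheory Limits Opposite

universe v u

/-- A comprehension of `α ∈ P(A)` is an arrow `c : X ⟶ A` with `P(c)(α) = ⊤` through which
every `f : Z ⟶ A` with `P(f)(α) = ⊤` factors uniquely. -/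
def IsComprehension {C : Type u} [Category.{v} C] (P : Cᵒᵖ ⥤ SemilatInfCat.{v})
    {A X : C} (α : P.obj (op A)) (c : X ⟶ A) : Prop :=
  P.map c.op α = ⊤ ∧
    ∀ ⦃Z : C⦄ (f : Z ⟶ A), P.map f.op α = ⊤ → ∃! g : Z ⟶ X, g ≫ c = f

lemma comprehension_top_comp {C : Type u} [Category.{v} C]
    (P : Cᵒᵖ ⥤ SemilatInfCat.{v}) {A X Z : C} (α : P.obj (op A))
    (c : X ⟶ A) (hc : P.map c.op α = ⊤) (u : Z ⟶ X) :
    P.map (u ≫ c).op α = ⊤ := by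
  have h1 : P.map (u ≫ c).op α = P.map u.op (P.map c.op α) := by
    rw [op_comp, P.map_comp]; rfl
  rw [h1, hc]
  exact (P.map u.op : InfTopHom _ _).map_top'

/-- comprehensions are stable under pullback: given a comprehension
`c : X ⟶ A` of `α`, a morphism `f : A' ⟶ A`, a comprehension `c' : X' ⟶ A'` of `P_f(α)`,
and the induced arrow `g : X' ⟶ X` making the square commute, that square is a pullback. -/
theorem comprehension_stable_under_pullback {C : Type u} [Category.{v} C]
    [HasBinaryProducts C]
    (P : Cᵒᵖ ⥤ SemilatInfCat.{v}) {A A' X X' : C} (α : P.obj (op A))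
    (c : X ⟶ A) (f : A' ⟶ A) (c' : X' ⟶ A')
    (h : IsComprehension P α c)
    (h' : IsComprehension P (P.map f.op α) c')
    (g : X' ⟶ X) (hg : g ≫ c = c' ≫ f) :
    IsPullback g c' c f := by
  obtain ⟨hc, huniv⟩ := h
  obtain ⟨hc', huniv'⟩ := h'
  have hs : ∀ s : PullbackCone c f, P.map s.snd.op (P.map f.op α) = ⊤ := by
    intro s
    have h2 : P.map (s.snd ≫ f).op α = ⊤ := by
      rw [← s.condition]
      exact comprehension_top_comp P α c hc s.fst
    rw [← h2, op_comp, P.map_comp]; rfl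
  refine ⟨⟨hg⟩, ⟨PullbackCone.IsLimit.mk _
    (fun s => (huniv' s.snd (hs s)).choose) ?_
    (fun s => (huniv' s.snd (hs s)).choose_spec.1) ?_⟩⟩
  · intro s
    obtain ⟨u, hu⟩ := huniv (s.fst ≫ c) (comprehension_top_comp P α c hc s.fst)
    have h1 : (huniv' s.snd (hs s)).choose ≫ g = u := by
      apply hu.2
      rw [Category.assoc, hg, ← Category.assoc, (huniv' s.snd (hs s)).choose_spec.1,
        s.condition]
    have h2 : s.fst = u := hu.2 s.fst rfl
    rw [h1, ← h2]
  · intro s m h1 h2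
    exact (huniv' s.snd (hs s)).choose_spec.2 m h2
end

section
/- In the comprehension completion P_c of a doctrine P, every element γ ∈ P_c(A,α) (i.e. γ ≤ α in P(A)) has a comprehension given by the identity arrow of A viewed as a morphism (A,γ) → (A,α) in G_P, and these comprehensions are full. -/
open CategoryTheory Limits Opposite

universe v u

variable {C : Type u} [Category.{v} C]

/-- Reindexing maps of a doctrine are monotone. -/
theorem doctrineMono {X Y : SemilatInfCat.{v}} (h : X ⟶ Y) {a b : X} (hab : a ≤ b) :
    h a ≤ h b := by
  let h' : InfTopHom X Y := h
  show h' a ≤ h' b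
  have hinf : h' (a ⊓ b) = h' a ⊓ h' b := map_inf h' a b
  rw [inf_eq_left.mpr hab] at hinf
  exact hinf.le.trans inf_le_right

/-- Objects of the Grothendieck category `G_P` of a doctrine `P`. -/
structure Groth (P : Cᵒᵖ ⥤ SemilatInfCat.{v}) : Type (max u v) where
  base : C
  pred : P.obj (op base)

/-- The Grothendieck category of a doctrine: morphisms `(A,α) ⟶ (B,β)` are morphisms
`f : A ⟶ B` of `C` with `α ≤ P(f)(β)`. -/
instance GrothCategory (P : Cᵒᵖ ⥤ SemilatInfCat.{v}) : Category (Groth P) where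
  Hom X Y := { f : X.base ⟶ Y.base // X.pred ≤ P.map f.op Y.pred }
  id X := ⟨𝟙 X.base, by
    have h : P.map (𝟙 X.base).op = 𝟙 (P.obj (op X.base)) := by simp
    rw [h]; exact le_of_eq rfl⟩
  comp {X Y Z} f g := ⟨f.1 ≫ g.1, by
    have e : P.map (f.1 ≫ g.1).op Z.pred = P.map f.1.op (P.map g.1.op Z.pred) := by
      rw [op_comp, P.map_comp]; rfl
    rw [e]
    exact f.2.trans (doctrineMono (P.map f.1.op) g.2)⟩
  id_comp f := by apply Subtype.ext; simp
  comp_id f := by apply Subtype.ext; simp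
  assoc f g h := by apply Subtype.ext; simp

/-- The comprehension arrow `id_A : (A,γ) ⟶ (A,α)` in `G_P`, for `γ ≤ α`. -/
def comprArrow (P : Cᵒᵖ ⥤ SemilatInfCat.{v}) {A : C} {γ α : P.obj (op A)} (h : γ ≤ α) :
    (⟨A, γ⟩ : Groth P) ⟶ ⟨A, α⟩ :=
  ⟨𝟙 A, by
    have e : P.map (𝟙 A).op = 𝟙 (P.obj (op A)) := by simp
    rw [e]; exact h.trans (le_of_eq rfl)⟩

/-- in the comprehension completion `P_c` of `P`, every `γ ∈ P_c(A,α)`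
(i.e. `γ ≤ α`) has as comprehension the identity arrow of `A`, viewed as the morphism
`(A,γ) ⟶ (A,α)` of `G_P`, and these comprehensions are full. -/
theorem comprehension_completion_has_full_comprehensions
    (P : Cᵒᵖ ⥤ SemilatInfCat.{v}) {A : C} (α γ : P.obj (op A)) (hγ : γ ≤ α) :
    -- `P_c(⦃γ⦄)(γ)` is the top element of the fiber over `(A,γ)`:
    (P.map (comprArrow P hγ).1.op γ ⊓ γ = γ) ∧
    -- universal property: any `f : (Z,ζ) ⟶ (A,α)` with `P_c(f)(γ) = ⊤`, i.e.
    -- `ζ ≤ P(f)(γ)`, factors uniquely through the comprehension arrow: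
    (∀ (Z : Groth P) (f : Z ⟶ (⟨A, α⟩ : Groth P)), Z.pred ≤ P.map f.1.op γ →
      ∃! g : Z ⟶ (⟨A, γ⟩ : Groth P), g ≫ comprArrow P hγ = f) ∧
    -- fullness: if the comprehension of `γ` factors through that of `γ'`, then `γ ≤ γ'`:
    (∀ (γ' : P.obj (op A)) (hγ' : γ' ≤ α),
      (∃ k : (⟨A, γ⟩ : Groth P) ⟶ ⟨A, γ'⟩, k ≫ comprArrow P hγ' = comprArrow P hγ) →
      γ ≤ γ') := by
  have e : P.map (𝟙 A).op = 𝟙 (P.obj (op A)) := by simp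
  refine ⟨?_, ?_, ?_⟩
  · show P.map (𝟙 A).op γ ⊓ γ = γ
    rw [e]; exact inf_idem γ
  · intro Z f hf
    refine ⟨⟨f.1, hf⟩, ?_, ?_⟩
    · apply Subtype.ext
      show f.1 ≫ 𝟙 A = f.1
      simp
    · intro g hg
      apply Subtype.ext
      have h2 : g.1 ≫ (comprArrow P hγ).1 = f.1 := congrArg Subtype.val hg
      simpa [comprArrow] using h2
  · rintro γ' hγ' ⟨k, hk⟩
    have hk1 : k.1 = 𝟙 A := by
      have h2 : k.1 ≫ (comprArrow P hγ').1 = (comprArrow P hγ).1 := congrArg Subtype.val hk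
      simpa [comprArrow] using h2
    have := k.2
    rw [hk1, e] at this
    exact this
end

section
/- If P : C^op → InfSemilattice is an elementary doctrine with fibered equalities δ_A ∈ P(A×A), then the comprehension completion P_c is elementary, with equality on (A,α) given by δ_{(A,α)} = δ_A ∧ P(pr₁)(α) ∧ P(pr₂)(α) ∈ P_c((A,α)×(A,α)). -/
open CategoryTheory Limits Opposite

universe v u

variable {C : Type u} [Category.{v} C] [HasBinaryProducts C]

/-- An elementary doctrine on a category `C` with binary products: a functor
`P : Cᵒᵖ ⥤ InfSL` together with fibered equalities `δ_A ∈ P(A×A)` such that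
`α ↦ P(pr₁)(α) ⊓ δ_A` is left adjoint to `P(⟨id,id⟩)` and, for every `X`,
`α ↦ P(⟨pr₁,pr₂⟩)(α) ⊓ P(⟨pr₂,pr₂⟩)(δ_A)` is left adjoint to
`P(⟨pr₁,pr₂,pr₂⟩) : P(X×A×A) → P(X×A)`. -/
structure Elementary (P : Cᵒᵖ ⥤ SemilatInfCat.{v}) : Type (max u v) where
  delta : ∀ A : C, P.obj (op (A ⨯ A))
  galois₁ : ∀ (A : C) (α : P.obj (op A)) (β : P.obj (op (A ⨯ A))),
    P.map (prod.fst : A ⨯ A ⟶ A).op α ⊓ delta A ≤ β ↔ α ≤ P.map (diag A).op β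
  galois₂ : ∀ (X A : C) (α : P.obj (op (X ⨯ A))) (β : P.obj (op (X ⨯ (A ⨯ A)))),
    P.map (prod.map (𝟙 X) (prod.fst : A ⨯ A ⟶ A)).op α ⊓
        P.map (prod.snd : X ⨯ (A ⨯ A) ⟶ A ⨯ A).op (delta A) ≤ β ↔
      α ≤ P.map (prod.map (𝟙 X) (diag A)).op β

variable (P : Cᵒᵖ ⥤ SemilatInfCat.{v})

/-- The external conjunction `α ⊠ β ∈ P(A × B)` of `α ∈ P(A)` and `β ∈ P(B)`. -/
noncomputable def boxConj {A B : C} (α : P.obj (op A)) (β : P.obj (op B)) : P.obj (op (A ⨯ B)) :=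
  P.map (prod.fst : A ⨯ B ⟶ A).op α ⊓ P.map (prod.snd : A ⨯ B ⟶ B).op β

set_option linter.unusedSectionVars false in
lemma pmap_mono {A B : C} (f : A ⟶ B) : Monotone (P.map f.op) := by
  intro a b h
  exact OrderHomClass.mono (show InfTopHom (P.obj (op B)).X (P.obj (op A)).X from P.map f.op) h

set_option linter.unusedSectionVars false in
lemma pmap_inf {A B : C} (f : A ⟶ B) (x y : P.obj (op B)) :
    P.map f.op (x ⊓ y) = P.map f.op x ⊓ P.map f.op y :=
  map_inf (show InfTopHom (P.obj (op B)).X (P.obj (op A)).X from P.map f.op) x y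

set_option linter.unusedSectionVars false in
lemma pmap_comp {A B D : C} (f : A ⟶ B) (g : B ⟶ D) (x : P.obj (op D)) :
    P.map (f ≫ g).op x = P.map f.op (P.map g.op x) := by
  rw [op_comp, P.map_comp]; rfl

set_option linter.unusedSectionVars false in
lemma pmap_id {A : C} (x : P.obj (op A)) : P.map (𝟙 A).op x = x := by
  rw [op_id, P.map_id]; rfl

/-- the comprehension completion `P_c` of an elementary doctrine `P` is
elementary, with equality on `(A,α)` given by `δ_{(A,α)} = δ_A ⊓ (α ⊠ α)`: both adjunction
conditions hold in the fibers of `P_c` (elements of the fiber over `(A,α)` are the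
`γ ≤ α`, the fiber over `(A,α)×(A,α) = (A×A, α⊠α)` consists of the `θ ≤ α⊠α`,
reindexing is truncated by the top element of the target fiber). -/
theorem comprehension_completion_elementary (E : Elementary P) :
    -- first adjunction condition for `P_c`:
    (∀ (A : C) (α γ : P.obj (op A)) (θ : P.obj (op (A ⨯ A))),
      γ ≤ α → θ ≤ boxConj P α α →
      (P.map (prod.fst : A ⨯ A ⟶ A).op γ ⊓ (E.delta A ⊓ boxConj P α α) ≤ θ ↔
        γ ≤ P.map (diag A).op θ ⊓ α)) ∧
    -- second adjunction condition for `P_c`: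
    (∀ (X A : C) (ξ : P.obj (op X)) (α : P.obj (op A))
      (γ : P.obj (op (X ⨯ A))) (θ : P.obj (op (X ⨯ (A ⨯ A)))),
      γ ≤ boxConj P ξ α → θ ≤ boxConj P ξ (boxConj P α α) →
      (P.map (prod.map (𝟙 X) (prod.fst : A ⨯ A ⟶ A)).op γ ⊓
          (P.map (prod.snd : X ⨯ (A ⨯ A) ⟶ A ⨯ A).op (E.delta A ⊓ boxConj P α α) ⊓
            boxConj P ξ (boxConj P α α)) ≤ θ ↔
        γ ≤ P.map (prod.map (𝟙 X) (diag A)).op θ ⊓ boxConj P ξ α)) := by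
  constructor
  · intro A α γ θ hγ _
    have hkey : P.map (prod.fst : A ⨯ A ⟶ A).op γ ⊓ E.delta A ≤ boxConj P α α := by
      refine le_inf (le_trans inf_le_left (pmap_mono P _ hγ)) ?_
      refine (E.galois₁ A γ _).2 ?_
      rw [← pmap_comp, prod.lift_snd, pmap_id]
      exact hγ
    constructor
    · intro h
      refine le_inf ((E.galois₁ A γ θ).1 (le_trans ?_ h)) hγ
      exact le_inf inf_le_left (le_inf inf_le_right hkey)
    · intro h
      exact le_trans (inf_le_inf_left _ inf_le_left)
        ((E.galois₁ A γ θ).2 (le_trans h inf_le_left))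
  · intro X A ξ α γ θ hγ hθ
    simp only [boxConj] at hγ hθ ⊢
    rw [pmap_inf, pmap_inf]
    -- f₁ = prod.map (𝟙 X) prod.fst, s = prod.snd
    have hbig : P.map (prod.map (𝟙 X) (prod.fst : A ⨯ A ⟶ A)).op γ ≤
        P.map (prod.fst : X ⨯ (A ⨯ A) ⟶ X).op ξ ⊓
          P.map (prod.snd : X ⨯ (A ⨯ A) ⟶ A ⨯ A).op (P.map (prod.fst : A ⨯ A ⟶ A).op α) := by
      have h1 := pmap_mono P (prod.map (𝟙 X) (prod.fst : A ⨯ A ⟶ A)) hγ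
      rw [pmap_inf, ← pmap_comp, ← pmap_comp, prod.map_fst, prod.map_snd,
        pmap_comp, pmap_comp, pmap_id] at h1
      exact h1
    have hsnd : P.map (prod.map (𝟙 X) (prod.fst : A ⨯ A ⟶ A)).op γ ⊓
        P.map (prod.snd : X ⨯ (A ⨯ A) ⟶ A ⨯ A).op (E.delta A) ≤
        P.map (prod.snd : X ⨯ (A ⨯ A) ⟶ A ⨯ A).op (P.map (prod.snd : A ⨯ A ⟶ A).op α) := by
      refine (E.galois₂ X A γ _).2 ?_
      rw [← pmap_comp, ← pmap_comp, prod.map_snd, Category.assoc, prod.lift_snd,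
        Category.comp_id]
      exact le_trans hγ inf_le_right
    have hfst : P.map (prod.map (𝟙 X) (prod.fst : A ⨯ A ⟶ A)).op γ ⊓
        P.map (prod.snd : X ⨯ (A ⨯ A) ⟶ A ⨯ A).op (E.delta A) ≤
        P.map (prod.snd : X ⨯ (A ⨯ A) ⟶ A ⨯ A).op (P.map (prod.fst : A ⨯ A ⟶ A).op α) :=
      le_trans inf_le_left (le_trans hbig inf_le_right)
    have hxi : P.map (prod.map (𝟙 X) (prod.fst : A ⨯ A ⟶ A)).op γ ⊓
        P.map (prod.snd : X ⨯ (A ⨯ A) ⟶ A ⨯ A).op (E.delta A) ≤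
        P.map (prod.fst : X ⨯ (A ⨯ A) ⟶ X).op ξ :=
      le_trans inf_le_left (le_trans hbig inf_le_left)
    constructor
    · intro h
      refine le_inf ((E.galois₂ X A γ θ).1 (le_trans ?_ h)) hγ
      exact le_inf inf_le_left
        (le_inf (le_inf inf_le_right (le_inf hfst hsnd)) (le_inf hxi (le_inf hfst hsnd)))
    · intro h
      exact le_trans (inf_le_inf_left _ (le_trans inf_le_left inf_le_left))
        ((E.galois₂ X A γ θ).2 (le_trans h inf_le_left))
end
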